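/- Let A' = K[y_1,y_2,y_3]/(y_1^2, y_2^2, y_3^2, y_1y_2 - y_1y_3 + y_2y_3) over a field K of characteristic 0, and let ℓ = a_1 y_1 + a_2 y_2 + a_3 y_3 with a_i ∈ K. Then the element (a_1+a_2-a_3)a_1 y_1 + (-a_1-a_2-a_3)a_2 y_2 + (-a_1+a_2+a_3)a_3 y_3 lies in the kernel of the multiplication map μ_ℓ : A'_1 → A'_2. -/
import Mathlib


open MvPolynomial

/-- The degree-`n` graded piece of the quotient of a polynomial ring by a
(homogeneous) ideal: the image of the homogeneous degree-`n` polynomials. -/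
noncomputable def gradedPiece {K σ : Type*} [Field K] (I : Ideal (MvPolynomial σ K))
    (n : ℕ) : Submodule K (MvPolynomial σ K ⧸ I) :=
  Submodule.map (Ideal.Quotient.mkₐ K I).toLinearMap (homogeneousSubmodule σ K n)

/-- The defining ideal of the Artinian Orlik–Terao algebra of the triangle graph. -/
noncomputable def triangleIdeal (K : Type*) [Field K] : Ideal (MvPolynomial (Fin 3) K) :=
  Ideal.span {X 0 ^ 2, X 1 ^ 2, X 2 ^ 2, X 0 * X 1 - X 0 * X 2 + X 1 * X 2}

/-- In `A' = K[y_1,y_2,y_3]/(y_1^2,y_2^2,y_3^2, y_1y_2-y_1y_3+y_2y_3)`, for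
`ℓ = a_1y_1 + a_2y_2 + a_3y_3` the element
`(a_1+a_2-a_3)a_1 y_1 + (-a_1-a_2-a_3)a_2 y_2 + (-a_1+a_2+a_3)a_3 y_3` lies in
`A'_1` and is in the kernel of the multiplication map `μ_ℓ : A'_1 → A'_2`. -/
theorem stmt8 {K : Type*} [Field K] [CharZero K] (a₁ a₂ a₃ : K) :
    Ideal.Quotient.mk (triangleIdeal K)
        (C ((a₁ + a₂ - a₃) * a₁) * X 0 + C ((-a₁ - a₂ - a₃) * a₂) * X 1 +
          C ((-a₁ + a₂ + a₃) * a₃) * X 2) ∈ gradedPiece (triangleIdeal K) 1 ∧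
    Ideal.Quotient.mk (triangleIdeal K)
        (C ((a₁ + a₂ - a₃) * a₁) * X 0 + C ((-a₁ - a₂ - a₃) * a₂) * X 1 +
          C ((-a₁ + a₂ + a₃) * a₃) * X 2) *
      Ideal.Quotient.mk (triangleIdeal K) (C a₁ * X 0 + C a₂ * X 1 + C a₃ * X 2) = 0 := by
  constructor
  · refine ⟨_, ?_, rfl⟩
    have h : ∀ (r : K) (i : Fin 3), (C r * X i : MvPolynomial (Fin 3) K).IsHomogeneous 1 := by
      intro r i
      simpa using (isHomogeneous_C (Fin 3) r).mul (isHomogeneous_X K i)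
    exact ((h _ 0).add (h _ 1)).add (h _ 2)
  · rw [← map_mul, Ideal.Quotient.eq_zero_iff_mem]
    have key : (C ((a₁ + a₂ - a₃) * a₁) * X 0 + C ((-a₁ - a₂ - a₃) * a₂) * X 1 +
          C ((-a₁ + a₂ + a₃) * a₃) * X 2) * (C a₁ * X 0 + C a₂ * X 1 + C a₃ * X 2) =
        C ((a₁ + a₂ - a₃) * a₁ * a₁) * (X 0 ^ 2 : MvPolynomial (Fin 3) K) +
        C ((-a₁ - a₂ - a₃) * a₂ * a₂) * X 1 ^ 2 +
        C ((-a₁ + a₂ + a₃) * a₃ * a₃) * X 2 ^ 2 +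
        C (-2 * (a₁ * a₂ * a₃)) * (X 0 * X 1 - X 0 * X 2 + X 1 * X 2) := by
      simp only [map_mul, map_add, map_sub, map_neg, map_ofNat, map_one]
      ring
    rw [key]
    have h0 : (X 0 ^ 2 : MvPolynomial (Fin 3) K) ∈ triangleIdeal K :=
      Ideal.subset_span (Set.mem_insert _ _)
    have h1 : (X 1 ^ 2 : MvPolynomial (Fin 3) K) ∈ triangleIdeal K :=
      Ideal.subset_span (Set.mem_insert_of_mem _ (Set.mem_insert _ _))
    have h2 : (X 2 ^ 2 : MvPolynomial (Fin 3) K) ∈ triangleIdeal K :=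
      Ideal.subset_span (Set.mem_insert_of_mem _ (Set.mem_insert_of_mem _ (Set.mem_insert _ _)))
    have h3 : (X 0 * X 1 - X 0 * X 2 + X 1 * X 2 : MvPolynomial (Fin 3) K) ∈ triangleIdeal K :=
      Ideal.subset_span (Set.mem_insert_of_mem _ (Set.mem_insert_of_mem _ (Set.mem_insert_of_mem _ rfl)))
    exact Ideal.add_mem _ (Ideal.add_mem _ (Ideal.add_mem _
      (Ideal.mul_mem_left _ _ h0) (Ideal.mul_mem_left _ _ h1))
      (Ideal.mul_mem_left _ _ h2)) (Ideal.mul_mem_left _ _ h3)
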